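/- Let w be a positive non-decreasing weight function with diverging W and α_c(w) < ∞. For any 0 < δ < δ', liminf_{x→∞} W⁻¹(W(x)+δ') / W⁻¹(W(x)+δ) ≥ e^{(δ'-δ)/α_c(w)}. -/

import Mathlib

open MeasureTheory Filter Topology Set
open scoped ENNReal NNReal

noncomputable section

/-- Extension of a weight sequence to the reals: `w(t) = w(⌊t⌋)` (and `w 0` for `t < 0`). -/
def wext (w : ℕ → ℝ) (t : ℝ) : ℝ := w ⌊t⌋₊

/-- `W(t) = ∫₀ᵗ du / w(u)`. -/
def Wfun (v : ℝ → ℝ) (t : ℝ) : ℝ := ∫ u in (0:ℝ)..t, (v u)⁻¹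

/-- `I_α(w) = ∫₀^∞ dx / w(W⁻¹(W(x)+α))`, valued in `[0,∞]`. -/
def Ia (v : ℝ → ℝ) (Winv : ℝ → ℝ) (α : ℝ) : ℝ≥0∞ :=
  ∫⁻ x in Ioi (0:ℝ), ENNReal.ofReal (v (Winv (Wfun v x + α)))⁻¹

/-- The critical parameter `α_c(w) = inf {α ≥ 0 : I_α(w) < ∞} ∈ [0,∞]` (inf ∅ = ∞). -/
def alphac (v : ℝ → ℝ) (Winv : ℝ → ℝ) : ℝ≥0∞ :=
  sInf (ENNReal.ofReal '' {α : ℝ | 0 < α ∧ Ia v Winv α < ⊤})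

/-!
Write `F = W⁻¹` and `g = w ∘ F`, so that `g y (y' - y) ≤ F y' - F y ≤ g y' (y' - y)`.
If `F ≤ β g` eventually, then `F (z + h) ≥ (1 + h / β) F z`, and iterating with `h = c / n`
gives `F (z + c) ≥ e^{c/β} F z`; so it suffices to prove `F ≤ β g` eventually for `β > α_c`.
Take `α < γ < β` with `I_α < ∞`. On `(F y, F (y + γ - α)]`, an interval of length at least
`(γ - α) g y` inside a tail of `I_α`, the integrand of `I_α` is at least `1 / g (y + γ)`;
hence `g y ≤ ε g (y + γ)` eventually, for any `ε > 0`. Summing the increments of `F` over steps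
of length `γ` then bounds `F` by a constant plus the geometric series `γ g / (1 - ε)`, which lies
below `β g` once `F` is large.
-/

lemma tendsto_setLIntegral_Ioi_atTop {μ : Measure ℝ} {f : ℝ → ℝ≥0∞} {a : ℝ}
    (hf : ∫⁻ x in Ioi a, f x ∂μ ≠ ∞) :
    Tendsto (fun T => ∫⁻ x in Ioi T, f x ∂μ) atTop (𝓝 0) := by
  set ν := (μ.restrict (Ioi a)).withDensity f
  have hν : Tendsto (fun T => ν (Ioi T)) atTop (𝓝 0) := by
    have hfin : ν (Ioi a) ≠ ∞ := by
      rwa [withDensity_apply _ measurableSet_Ioi, Measure.restrict_restrict measurableSet_Ioi,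
        inter_self]
    have hempty : ⋂ T : ℝ, Ioi T = ∅ := iInter_eq_empty_iff.2 fun x => ⟨x, lt_irrefl x⟩
    have := tendsto_measure_iInter_atTop (μ := ν)
      (fun _ => measurableSet_Ioi.nullMeasurableSet) (fun _ _ h => Ioi_subset_Ioi h) ⟨a, hfin⟩
    rwa [hempty, measure_empty] at this
  refine hν.congr' ?_
  filter_upwards [eventually_ge_atTop a] with T hT
  rw [withDensity_apply _ measurableSet_Ioi, Measure.restrict_restrict measurableSet_Ioi,
    Ioi_inter_Ioi, sup_eq_left.2 hT]

section Growth

variable {F g : ℝ → ℝ}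

lemma le_add_mul_of_le_mul_shift {a γ ε : ℝ} (hγ : 0 < γ) (hε0 : 0 ≤ ε) (hε1 : ε < 1)
    (hg : ∀ y, a ≤ y → 0 ≤ g y)
    (hF : ∀ y y', a ≤ y → y ≤ y' → F y' - F y ≤ g y' * (y' - y))
    (hshift : ∀ y, a ≤ y → g y ≤ ε * g (y + γ)) :
    ∀ z, a ≤ z → F z ≤ F a + γ / (1 - ε) * g z := by
  set q := γ / (1 - ε)
  have hq : ε * q + γ = q := by
    simp only [q]
    field_simp [(sub_pos.2 hε1).ne']
    ring
  have hγq : γ ≤ q := le_div_self hγ.le (sub_pos.2 hε1) (by linarith)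
  have hq0 : 0 ≤ q := hγ.le.trans hγq
  suffices h : ∀ n : ℕ, ∀ z, a ≤ z → z ≤ a + n * γ → F z ≤ F a + q * g z by
    intro z hz
    obtain ⟨n, hn⟩ := exists_nat_ge ((z - a) / γ)
    exact h n z hz (by linarith [(div_le_iff₀ hγ).1 hn])
  intro n
  induction n with
  | zero =>
    intro z hz hz'
    obtain rfl : z = a := le_antisymm (by simpa using hz') hz
    exact le_add_of_nonneg_right (mul_nonneg hq0 (hg z le_rfl))
  | succ n ih =>
    intro z hz hz'
    by_cases hnear : z ≤ a + γ
    · nlinarith [hF a z le_rfl hz, hg z hz]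
    · have hprev := ih (z - γ) (by linarith) (by push_cast at hz'; linarith)
      have hlast := hF (z - γ) z (by linarith) (by linarith)
      have hdec := hshift (z - γ) (by linarith)
      rw [sub_add_cancel] at hdec
      rw [sub_sub_cancel] at hlast
      have hcoef : (ε * q + γ) * g z = q * g z := by rw [hq]
      linarith [mul_le_mul_of_nonneg_left hdec hq0]

lemma eventually_le_mul_of_le_add_mul {a q β : ℝ} (hq : 0 < q) (hqβ : q < β)
    (hF : Tendsto F atTop atTop) (h : ∀ᶠ z in atTop, F z ≤ a + q * g z) :
    ∀ᶠ z in atTop, F z ≤ β * g z := by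
  filter_upwards [h, hF.eventually_ge_atTop (β * a / (β - q))] with z hz hFz
  have hβa : β * a ≤ (β - q) * F z := by rwa [div_le_iff₀' (sub_pos.2 hqβ)] at hFz
  refine le_of_mul_le_mul_left ?_ hq
  nlinarith [mul_le_mul_of_nonneg_left hz (hq.trans hqβ).le]

lemma exp_mul_le_of_le_mul {a β c : ℝ} (hβ : 0 < β) (hc : 0 ≤ c)
    (hF : ∀ y y', a ≤ y → y ≤ y' → g y * (y' - y) ≤ F y' - F y)
    (hFg : ∀ y, a ≤ y → F y ≤ β * g y) {z : ℝ} (hz : a ≤ z) :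
    Real.exp (c / β) * F z ≤ F (z + c) := by
  have hstep : ∀ y h, a ≤ y → 0 ≤ h → (1 + h / β) * F y ≤ F (y + h) := by
    intro y h hy hh
    have h1 : h / β * F y ≤ h * g y := by
      calc h / β * F y ≤ h / β * (β * g y) := by gcongr; exact hFg y hy
        _ = h * g y := by field_simp
    have h2 := hF y (y + h) hy (by linarith)
    rw [add_sub_cancel_left] at h2
    linarith
  have hiter : ∀ (n : ℕ) (h : ℝ), 0 ≤ h → (1 + h / β) ^ n * F z ≤ F (z + n * h) := by
    intro n h hh
    induction n with
    | zero => simp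
    | succ n ih =>
      calc (1 + h / β) ^ (n + 1) * F z = (1 + h / β) * ((1 + h / β) ^ n * F z) := by ring
        _ ≤ (1 + h / β) * F (z + n * h) := by gcongr
        _ ≤ F (z + n * h + h) := hstep _ h (by nlinarith [n.cast_nonneg (α := ℝ)]) hh
        _ = F (z + (n + 1 : ℕ) * h) := by push_cast; ring_nf
  refine le_of_tendsto ((Real.tendsto_one_add_div_pow_exp (c / β)).mul_const (F z)) ?_
  filter_upwards [eventually_ge_atTop 1] with n hn
  have hn' : (n : ℝ) ≠ 0 := by positivity
  have := hiter n (c / n) (by positivity)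
  rwa [div_right_comm, mul_div_cancel₀ _ hn'] at this

end Growth

lemma ite_le_of_forall_exp_div_le {A L : ℝ≥0∞} {c : ℝ} (hA : A ≠ ⊤) (hc : 0 < c)
    (h : ∀ β : ℝ, A < ENNReal.ofReal β → ENNReal.ofReal (Real.exp (c / β)) ≤ L) :
    (if A = 0 then ⊤ else ENNReal.ofReal (Real.exp (c / A.toReal))) ≤ L := by
  split_ifs with hA0
  · subst hA0
    have hlim : Tendsto (fun β : ℝ => ENNReal.ofReal (Real.exp (c / β))) (𝓝[>] 0) (𝓝 ⊤) := by
      simp_rw [div_eq_mul_inv]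
      exact ENNReal.tendsto_ofReal_atTop.comp
        (Real.tendsto_exp_atTop.comp (tendsto_inv_nhdsGT_zero.const_mul_atTop hc))
    refine le_of_tendsto hlim ?_
    filter_upwards [self_mem_nhdsWithin] with β hβ
    exact h β (ENNReal.ofReal_pos.2 hβ)
  · have hApos : 0 < A.toReal := ENNReal.toReal_pos hA0 hA
    have hlim : Tendsto (fun β : ℝ => ENNReal.ofReal (Real.exp (c / β))) (𝓝[>] A.toReal)
        (𝓝 (ENNReal.ofReal (Real.exp (c / A.toReal)))) := by
      refine (ContinuousAt.tendsto ?_).mono_left nhdsWithin_le_nhds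
      exact (ENNReal.continuous_ofReal.comp Real.continuous_exp).continuousAt.comp
        (continuousAt_const.div continuousAt_id hApos.ne')
    refine le_of_tendsto hlim ?_
    filter_upwards [self_mem_nhdsWithin] with β hβ
    refine h β ?_
    rwa [← ENNReal.ofReal_toReal hA, ENNReal.ofReal_lt_ofReal_iff (hApos.trans hβ)]

lemma exists_Ia_ne_top_of_alphac_lt {v Winv : ℝ → ℝ} {β : ℝ}
    (h : alphac v Winv < ENNReal.ofReal β) : ∃ α, 0 < α ∧ α < β ∧ Ia v Winv α ≠ ⊤ := by
  obtain ⟨_, ⟨α, ⟨hα, hIa⟩, rfl⟩, hlt⟩ := sInf_lt_iff.1 h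
  exact ⟨α, hα, (ENNReal.ofReal_lt_ofReal_iff'.1 hlt).1, hIa.ne⟩

section Weight

variable {w Winv : ℝ → ℝ}

lemma Wfun_zero : Wfun w 0 = 0 := intervalIntegral.integral_same

lemma intervalIntegrable_inv_weight (hpos : ∀ x : ℝ, 0 ≤ x → 0 < w x)
    (hmono : MonotoneOn w (Ici 0)) {a b : ℝ} (ha : 0 ≤ a) (hb : 0 ≤ b) :
    IntervalIntegrable (fun u => (w u)⁻¹) volume a b := by
  have hsub : uIcc a b ⊆ Ici 0 := fun x hx => le_trans (le_min ha hb) hx.1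
  refine AntitoneOn.intervalIntegrable fun x hx y hy hxy => ?_
  exact inv_anti₀ (hpos x (hsub hx)) (hmono (hsub hx) (hsub hy) hxy)

lemma Wfun_sub_mem_Icc (hpos : ∀ x : ℝ, 0 ≤ x → 0 < w x)
    (hmono : MonotoneOn w (Ici 0)) {t t' : ℝ} (ht : 0 ≤ t) (htt' : t ≤ t') :
    Wfun w t' - Wfun w t ∈ Icc ((t' - t) / w t') ((t' - t) / w t) := by
  have ht' : 0 ≤ t' := ht.trans htt'
  have hint := intervalIntegrable_inv_weight hpos hmono ht ht'
  rw [Wfun, Wfun, intervalIntegral.integral_interval_sub_left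
    (intervalIntegrable_inv_weight hpos hmono le_rfl ht')
    (intervalIntegrable_inv_weight hpos hmono le_rfl ht), div_eq_mul_inv, div_eq_mul_inv]
  constructor
  · simpa using intervalIntegral.integral_mono_on htt' intervalIntegrable_const hint
      fun u hu => inv_anti₀ (hpos u (ht.trans hu.1)) (hmono (ht.trans hu.1) ht' hu.2)
  · simpa using intervalIntegral.integral_mono_on htt' hint intervalIntegrable_const
      fun u hu => inv_anti₀ (hpos t ht) (hmono ht (ht.trans hu.1) hu.1)

lemma strictMonoOn_Wfun (hpos : ∀ x : ℝ, 0 ≤ x → 0 < w x)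
    (hmono : MonotoneOn w (Ici 0)) : StrictMonoOn (Wfun w) (Ici 0) := by
  intro t ht t' ht' htt'
  have h := (Wfun_sub_mem_Icc hpos hmono ht htt'.le).1
  have : 0 < (t' - t) / w t' := div_pos (sub_pos.2 htt') (hpos t' ht')
  linarith

lemma Wfun_nonneg (hpos : ∀ x : ℝ, 0 ≤ x → 0 < w x)
    (hmono : MonotoneOn w (Ici 0)) {t : ℝ} (ht : 0 ≤ t) : 0 ≤ Wfun w t := by
  simpa [Wfun_zero] using (strictMonoOn_Wfun hpos hmono).monotoneOn self_mem_Ici ht ht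

lemma exists_Wfun_eq (hpos : ∀ x : ℝ, 0 ≤ x → 0 < w x)
    (hmono : MonotoneOn w (Ici 0)) (hWdiv : Tendsto (Wfun w) atTop atTop) {y : ℝ}
    (hy : 0 ≤ y) : ∃ t, 0 ≤ t ∧ Wfun w t = y := by
  obtain ⟨T, hyT, hT⟩ := ((hWdiv.eventually_ge_atTop y).and (eventually_ge_atTop 0)).exists
  have hcont : ContinuousOn (Wfun w) (Icc 0 T) := by
    have := intervalIntegral.continuousOn_primitive_interval'
      (intervalIntegrable_inv_weight hpos hmono le_rfl hT) left_mem_uIcc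
    rwa [uIcc_of_le hT] at this
  obtain ⟨t, ht, hty⟩ := intermediate_value_Icc hT hcont ⟨by rwa [Wfun_zero], hyT⟩
  exact ⟨t, ht.1, hty⟩

lemma Winv_nonneg (hpos : ∀ x : ℝ, 0 ≤ x → 0 < w x)
    (hmono : MonotoneOn w (Ici 0)) (hWdiv : Tendsto (Wfun w) atTop atTop)
    (hWinv : ∀ t : ℝ, 0 ≤ t → Winv (Wfun w t) = t) {y : ℝ} (hy : 0 ≤ y) : 0 ≤ Winv y := by
  obtain ⟨t, ht, rfl⟩ := exists_Wfun_eq hpos hmono hWdiv hy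
  rwa [hWinv t ht]

lemma monotoneOn_Winv (hpos : ∀ x : ℝ, 0 ≤ x → 0 < w x)
    (hmono : MonotoneOn w (Ici 0)) (hWdiv : Tendsto (Wfun w) atTop atTop)
    (hWinv : ∀ t : ℝ, 0 ≤ t → Winv (Wfun w t) = t)
    (hWinv' : ∀ y : ℝ, 0 ≤ y → Wfun w (Winv y) = y) : MonotoneOn Winv (Ici 0) := by
  intro y hy y' hy' hyy'
  rwa [← (strictMonoOn_Wfun hpos hmono).le_iff_le (Winv_nonneg hpos hmono hWdiv hWinv hy)
    (Winv_nonneg hpos hmono hWdiv hWinv hy'), hWinv' y hy, hWinv' y' hy']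

lemma Winv_sub_mem_Icc (hpos : ∀ x : ℝ, 0 ≤ x → 0 < w x)
    (hmono : MonotoneOn w (Ici 0)) (hWdiv : Tendsto (Wfun w) atTop atTop)
    (hWinv : ∀ t : ℝ, 0 ≤ t → Winv (Wfun w t) = t)
    (hWinv' : ∀ y : ℝ, 0 ≤ y → Wfun w (Winv y) = y) {y y' : ℝ} (hy : 0 ≤ y) (hyy' : y ≤ y') :
    Winv y' - Winv y ∈ Icc (w (Winv y) * (y' - y)) (w (Winv y') * (y' - y)) := by
  have hy' : 0 ≤ y' := hy.trans hyy'
  have hW := Wfun_sub_mem_Icc hpos hmono (Winv_nonneg hpos hmono hWdiv hWinv hy)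
    (monotoneOn_Winv hpos hmono hWdiv hWinv hWinv' hy hy' hyy')
  rw [hWinv' y hy, hWinv' y' hy'] at hW
  exact ⟨(le_div_iff₀' (hpos _ (Winv_nonneg hpos hmono hWdiv hWinv hy))).1 hW.2,
    (div_le_iff₀' (hpos _ (Winv_nonneg hpos hmono hWdiv hWinv hy'))).1 hW.1⟩

lemma tendsto_Winv_atTop (hpos : ∀ x : ℝ, 0 ≤ x → 0 < w x)
    (hmono : MonotoneOn w (Ici 0)) (hWdiv : Tendsto (Wfun w) atTop atTop)
    (hWinv : ∀ t : ℝ, 0 ≤ t → Winv (Wfun w t) = t)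
    (hWinv' : ∀ y : ℝ, 0 ≤ y → Wfun w (Winv y) = y) : Tendsto Winv atTop atTop := by
  refine tendsto_atTop_atTop.2 fun b => ⟨Wfun w (max b 0), fun y hy => ?_⟩
  have h0 : 0 ≤ Wfun w (max b 0) := Wfun_nonneg hpos hmono (le_max_right b 0)
  calc b ≤ max b 0 := le_max_left b 0
    _ = Winv (Wfun w (max b 0)) := (hWinv _ (le_max_right b 0)).symm
    _ ≤ Winv y := monotoneOn_Winv hpos hmono hWdiv hWinv hWinv' h0 (h0.trans hy) hy

lemma eventually_w_Winv_le_mul (hpos : ∀ x : ℝ, 0 ≤ x → 0 < w x)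
    (hmono : MonotoneOn w (Ici 0)) (hWdiv : Tendsto (Wfun w) atTop atTop)
    (hWinv : ∀ t : ℝ, 0 ≤ t → Winv (Wfun w t) = t)
    (hWinv' : ∀ y : ℝ, 0 ≤ y → Wfun w (Winv y) = y) {α γ ε : ℝ} (hα : 0 ≤ α) (hαγ : α < γ)
    (hε : 0 < ε) (hIa : Ia w Winv α ≠ ⊤) :
    ∀ᶠ y in atTop, w (Winv y) ≤ ε * w (Winv (y + γ)) := by
  set f : ℝ → ℝ≥0∞ := fun x => ENNReal.ofReal (w (Winv (Wfun w x + α)))⁻¹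
  have hη : 0 < γ - α := sub_pos.2 hαγ
  have hWinv_mono := monotoneOn_Winv hpos hmono hWdiv hWinv hWinv'
  have htail : ∀ᶠ y in atTop, ∫⁻ x in Ioi (Winv y), f x ≤ ENNReal.ofReal (ε * (γ - α)) :=
    (tendsto_Winv_atTop hpos hmono hWdiv hWinv hWinv').eventually <|
      (tendsto_setLIntegral_Ioi_atTop hIa).eventually <|
        ge_mem_nhds (ENNReal.ofReal_pos.2 (mul_pos hε hη))
  filter_upwards [htail, eventually_ge_atTop 0] with y hy hy0
  set s := Ioc (Winv y) (Winv (y + (γ - α)))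
  have hWinv_nonneg : ∀ {z}, 0 ≤ z → 0 ≤ Winv z := Winv_nonneg hpos hmono hWdiv hWinv
  have hgyγ := hpos _ (hWinv_nonneg (by linarith : 0 ≤ y + γ))
  have hf : ∀ x ∈ s, ENNReal.ofReal (w (Winv (y + γ)))⁻¹ ≤ f x := by
    intro x hx
    have hx0 : 0 ≤ x := (hWinv_nonneg hy0).trans hx.1.le
    have hWx : Wfun w x ≤ y + (γ - α) := by
      rw [← hWinv' (y + (γ - α)) (by linarith)]
      exact (strictMonoOn_Wfun hpos hmono).monotoneOn hx0 (hx0.trans hx.2) hx.2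
    have hWx0 : 0 ≤ Wfun w x + α := add_nonneg (Wfun_nonneg hpos hmono hx0) hα
    refine ENNReal.ofReal_le_ofReal (inv_anti₀ (hpos _ (hWinv_nonneg hWx0)) ?_)
    exact hmono (hWinv_nonneg hWx0) (hWinv_nonneg (by linarith))
      (hWinv_mono hWx0 (by linarith : 0 ≤ y + γ) (by linarith))
  have hlen : ENNReal.ofReal (w (Winv y) * (γ - α)) ≤ volume s := by
    have h := (Winv_sub_mem_Icc hpos hmono hWdiv hWinv hWinv' hy0
      (le_add_of_nonneg_right hη.le)).1
    rw [add_sub_cancel_left] at h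
    rw [Real.volume_Ioc]
    exact ENNReal.ofReal_le_ofReal h
  have hbound : ENNReal.ofReal ((w (Winv (y + γ)))⁻¹ * (w (Winv y) * (γ - α)))
      ≤ ENNReal.ofReal (ε * (γ - α)) :=
    calc ENNReal.ofReal ((w (Winv (y + γ)))⁻¹ * (w (Winv y) * (γ - α)))
        = ENNReal.ofReal (w (Winv (y + γ)))⁻¹ * ENNReal.ofReal (w (Winv y) * (γ - α)) :=
          ENNReal.ofReal_mul (inv_nonneg.2 hgyγ.le)
      _ ≤ ENNReal.ofReal (w (Winv (y + γ)))⁻¹ * volume s := by gcongr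
      _ = ∫⁻ _ in s, ENNReal.ofReal (w (Winv (y + γ)))⁻¹ := (setLIntegral_const s _).symm
      _ ≤ ∫⁻ x in s, f x := setLIntegral_mono' measurableSet_Ioc hf
      _ ≤ ∫⁻ x in Ioi (Winv y), f x := lintegral_mono_set Ioc_subset_Ioi_self
      _ ≤ ENNReal.ofReal (ε * (γ - α)) := hy
  rw [ENNReal.ofReal_le_ofReal_iff (mul_pos hε hη).le, ← mul_assoc, inv_mul_eq_div] at hbound
  have := le_of_mul_le_mul_right hbound hη
  rwa [div_le_iff₀ hgyγ] at this

lemma eventually_exp_mul_Winv_le (hpos : ∀ x : ℝ, 0 ≤ x → 0 < w x)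
    (hmono : MonotoneOn w (Ici 0)) (hWdiv : Tendsto (Wfun w) atTop atTop)
    (hWinv : ∀ t : ℝ, 0 ≤ t → Winv (Wfun w t) = t)
    (hWinv' : ∀ y : ℝ, 0 ≤ y → Wfun w (Winv y) = y) {α β c : ℝ} (hα : 0 < α) (hαβ : α < β)
    (hIa : Ia w Winv α ≠ ⊤) (hc : 0 ≤ c) :
    ∀ᶠ z in atTop, Real.exp (c / β) * Winv z ≤ Winv (z + c) := by
  obtain ⟨γ, hαγ, hγβ⟩ := exists_between hαβ
  obtain ⟨q, hγq, hqβ⟩ := exists_between hγβ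
  have hγ : 0 < γ := hα.trans hαγ
  have hq : 0 < q := hγ.trans hγq
  have hε : 0 < 1 - γ / q := sub_pos.2 ((div_lt_one hq).2 hγq)
  have hε1 : 1 - γ / q < 1 := sub_lt_self 1 (div_pos hγ hq)
  have hq_eq : γ / (1 - (1 - γ / q)) = q := by rw [sub_sub_cancel, div_div_cancel₀ hγ.ne']
  have hincr : ∀ y y', 0 ≤ y → y ≤ y' →
      Winv y' - Winv y ∈ Icc (w (Winv y) * (y' - y)) (w (Winv y') * (y' - y)) :=
    fun _ _ => Winv_sub_mem_Icc hpos hmono hWdiv hWinv hWinv'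
  obtain ⟨a, ha⟩ := eventually_atTop.1 (eventually_w_Winv_le_mul hpos hmono hWdiv hWinv hWinv'
    hα.le hαγ hε hIa)
  have hsum := le_add_mul_of_le_mul_shift (F := Winv) (g := fun y => w (Winv y))
    (a := max a 0) hγ hε.le hε1
    (fun y hy => (hpos _ (Winv_nonneg hpos hmono hWdiv hWinv ((le_max_right _ _).trans hy))).le)
    (fun y y' hy hyy' => (hincr y y' ((le_max_right _ _).trans hy) hyy').2)
    (fun y hy => ha y ((le_max_left _ _).trans hy))
  rw [hq_eq] at hsum
  obtain ⟨b, hb⟩ := eventually_atTop.1 <| eventually_le_mul_of_le_add_mul hq hqβ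
    (tendsto_Winv_atTop hpos hmono hWdiv hWinv hWinv') (eventually_atTop.2 ⟨max a 0, hsum⟩)
  refine eventually_atTop.2 ⟨max b 0, fun z hz => ?_⟩
  exact exp_mul_le_of_le_mul (F := Winv) (g := fun y => w (Winv y)) (a := max b 0)
    (hq.trans hqβ) hc (fun y y' hy hyy' => (hincr y y' ((le_max_right _ _).trans hy) hyy').1)
    (fun y hy => hb y ((le_max_left _ _).trans hy)) hz

lemma exp_le_liminf_of_Ia_ne_top (hpos : ∀ x : ℝ, 0 ≤ x → 0 < w x)
    (hmono : MonotoneOn w (Ici 0)) (hWdiv : Tendsto (Wfun w) atTop atTop)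
    (hWinv : ∀ t : ℝ, 0 ≤ t → Winv (Wfun w t) = t)
    (hWinv' : ∀ y : ℝ, 0 ≤ y → Wfun w (Winv y) = y) {α β δ δ' : ℝ} (hα : 0 < α)
    (hαβ : α < β) (hIa : Ia w Winv α ≠ ⊤) (hδδ' : δ ≤ δ') :
    ENNReal.ofReal (Real.exp ((δ' - δ) / β)) ≤
      liminf (fun x => ENNReal.ofReal (Winv (Wfun w x + δ') / Winv (Wfun w x + δ))) atTop := by
  have hz : Tendsto (fun x => Wfun w x + δ) atTop atTop := tendsto_atTop_add_const_right _ δ hWdiv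
  refine le_liminf_of_le (by isBoundedDefault) ?_
  filter_upwards [hz.eventually (eventually_exp_mul_Winv_le hpos hmono hWdiv hWinv hWinv' hα hαβ
      hIa (sub_nonneg.2 hδδ')),
    hz.eventually ((tendsto_Winv_atTop hpos hmono hWdiv hWinv hWinv').eventually_gt_atTop 0)]
    with x hexp hden
  rw [add_add_sub_cancel] at hexp
  exact ENNReal.ofReal_le_ofReal ((le_div_iff₀ hden).2 hexp)

end Weight

theorem stmt12_general (w : ℝ → ℝ) (hpos : ∀ x : ℝ, 0 ≤ x → 0 < w x)
    (hmono : MonotoneOn w (Ici (0:ℝ)))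
    (hWdiv : Tendsto (Wfun w) atTop atTop)
    (Winv : ℝ → ℝ)
    (hWinv : ∀ t : ℝ, 0 ≤ t → Winv (Wfun w t) = t)
    (hWinv' : ∀ y : ℝ, 0 ≤ y → Wfun w (Winv y) = y)
    (hfin : alphac w Winv < ⊤)
    (δ δ' : ℝ) (hδδ' : δ < δ') :
    (if alphac w Winv = 0 then ⊤
      else ENNReal.ofReal (Real.exp ((δ' - δ) / (alphac w Winv).toReal)))
      ≤ Filter.liminf
          (fun x : ℝ => ENNReal.ofReal (Winv (Wfun w x + δ') / Winv (Wfun w x + δ)))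
          atTop := by
  refine ite_le_of_forall_exp_div_le hfin.ne (sub_pos.2 hδδ') fun β hβ => ?_
  obtain ⟨α, hα, hαβ, hIa⟩ := exists_Ia_ne_top_of_alphac_lt hβ
  exact exp_le_liminf_of_Ia_ne_top hpos hmono hWdiv hWinv hWinv' hα hαβ hIa hδδ'.le

/-- if `α_c(w) < ∞`, then for `0 < δ < δ'`,
`liminf_{x→∞} W⁻¹(W(x)+δ')/W⁻¹(W(x)+δ) ≥ e^{(δ'-δ)/α_c(w)}` (the RHS being `∞` when
`α_c(w) = 0`). -/
theorem stmt12 (w : ℝ → ℝ) (hpos : ∀ x : ℝ, 0 ≤ x → 0 < w x)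
    (hmono : MonotoneOn w (Ici (0:ℝ)))
    (hWdiv : Tendsto (Wfun w) atTop atTop)
    (Winv : ℝ → ℝ)
    (hWinv : ∀ t : ℝ, 0 ≤ t → Winv (Wfun w t) = t)
    (hWinv' : ∀ y : ℝ, 0 ≤ y → Wfun w (Winv y) = y)
    (hfin : alphac w Winv < ⊤)
    (δ δ' : ℝ) (hδ : 0 < δ) (hδδ' : δ < δ') :
    (if alphac w Winv = 0 then ⊤
      else ENNReal.ofReal (Real.exp ((δ' - δ) / (alphac w Winv).toReal)))
      ≤ Filter.liminf
          (fun x : ℝ => ENNReal.ofReal (Winv (Wfun w x + δ') / Winv (Wfun w x + δ)))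
          atTop :=
  stmt12_general w hpos hmono hWdiv Winv hWinv hWinv' hfin δ δ' hδδ'
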